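/- Let n, k be positive integers and 0 ≤ i ≤ n−k. If (π₁, π₂, π₃) is a triple of set partitions of [n] with π₁, π₂ having k+i blocks and π₃ having n−i blocks, satisfying min(π₁) = min(π₂), Sing(π₁) = Sing(π₂), min(π₁) ∪ Sing(π₃) = [n], and Sing(π₁) ∪ min(π₃) = [n], then: (i) |min(π₁) ∩ min(π₃)| = k; (ii) |Sing(π₁) \ min(π₃)| = i; (iii) |Sing(π₃) \ min(π₁)| = n−k−i. -/
import Mathlib


open Polynomial

/-- The set of minima of the blocks of a set partition of `{1, …, n}` (modelled on `Fin n`). -/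
def blockMins {n : ℕ} (P : Finpartition (Finset.univ : Finset (Fin n))) : Finset (Fin n) :=
  P.parts.attach.image fun B =>
    B.1.min' (Finset.nonempty_iff_ne_empty.2 (by simpa using P.ne_bot B.2))

/-- The set of elements forming singleton blocks of a set partition of `{1, …, n}`. -/
def sing {n : ℕ} (P : Finpartition (Finset.univ : Finset (Fin n))) : Finset (Fin n) :=
  Finset.univ.filter fun x => ({x} : Finset (Fin n)) ∈ P.parts

lemma card_blockMins {n : ℕ} (P : Finpartition (Finset.univ : Finset (Fin n))) :
    (blockMins P).card = P.parts.card := by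
  unfold blockMins
  rw [Finset.card_image_of_injective _ ?_, Finset.card_attach]
  intro B₁ B₂ h
  by_contra hne
  have hne' : B₁.1 ≠ B₂.1 := fun hh => hne (Subtype.ext hh)
  have hd := P.disjoint (Finset.mem_coe.2 B₁.2) (Finset.mem_coe.2 B₂.2) hne'
  have h1 := Finset.min'_mem B₁.1 (Finset.nonempty_iff_ne_empty.2 (by simpa using P.ne_bot B₁.2))
  have h2 := Finset.min'_mem B₂.1 (Finset.nonempty_iff_ne_empty.2 (by simpa using P.ne_bot B₂.2))
  dsimp only at h
  rw [h] at h1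
  exact Finset.disjoint_left.1 hd h1 h2

lemma sing_subset_blockMins {n : ℕ} (P : Finpartition (Finset.univ : Finset (Fin n))) :
    sing P ⊆ blockMins P := by
  intro x hx
  simp only [sing, Finset.mem_filter] at hx
  exact Finset.mem_image.2 ⟨⟨{x}, hx.2⟩, Finset.mem_attach _ _, by simp⟩

/-- For a triple `(π₁, π₂, π₃)` of set partitions of `[n]` with `π₁, π₂` having `k + i`
blocks and `π₃` having `n - i` blocks, with equal minima and singleton sets for `π₁, π₂`,
and `min(π₁) ∪ Sing(π₃) = Sing(π₁) ∪ min(π₃) = [n]`, one has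
`|min(π₁) ∩ min(π₃)| = k`, `|Sing(π₁) \ min(π₃)| = i`, `|Sing(π₃) \ min(π₁)| = n - k - i`. -/
theorem stmt13 (n k i : ℕ) (hn : 1 ≤ n) (hk : 1 ≤ k) (hi : i ≤ n - k)
    (π₁ π₂ π₃ : Finpartition (Finset.univ : Finset (Fin n)))
    (h1 : π₁.parts.card = k + i) (h2 : π₂.parts.card = k + i)
    (h3 : π₃.parts.card = n - i)
    (hmin : blockMins π₁ = blockMins π₂) (hsing : sing π₁ = sing π₂)
    (hcov1 : blockMins π₁ ∪ sing π₃ = Finset.univ)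
    (hcov2 : sing π₁ ∪ blockMins π₃ = Finset.univ) :
    (blockMins π₁ ∩ blockMins π₃).card = k ∧
    (sing π₁ \ blockMins π₃).card = i ∧
    (sing π₃ \ blockMins π₁).card = n - k - i := by
  set A := blockMins π₁ with hA
  set B := blockMins π₃ with hB
  set S := sing π₁ with hS
  set T := sing π₃ with hT
  have hcardA : A.card = k + i := by rw [hA, card_blockMins, h1]
  have hcardB : B.card = n - i := by rw [hB, card_blockMins, h3]
  have hTB : T ⊆ B := sing_subset_blockMins π₃
  have hSA : S ⊆ A := sing_subset_blockMins π₁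
  have hku : (Finset.univ : Finset (Fin n)).card = n := Finset.card_univ.trans (Fintype.card_fin n)
  have hple : π₁.parts.card ≤ n := by
    have := π₁.card_parts_le_card
    simpa [hku] using this
  have hABu : A ∪ B = Finset.univ := by
    apply Finset.eq_univ_of_forall
    intro x
    have hx : x ∈ A ∪ T := by rw [hcov1]; exact Finset.mem_univ x
    rcases Finset.mem_union.1 hx with h | h
    · exact Finset.mem_union_left _ h
    · exact Finset.mem_union_right _ (hTB h)
  have hsum : (A ∩ B).card + (A ∪ B).card = A.card + B.card :=
    Finset.card_inter_add_card_union A B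
  rw [hABu, hku, hcardA, hcardB] at hsum
  refine ⟨by omega, ?_, ?_⟩
  · have hSB : S \ B = Finset.univ \ B := by
      apply Finset.Subset.antisymm (Finset.sdiff_subset_sdiff (Finset.subset_univ S) le_rfl)
      intro x hx
      rcases Finset.mem_sdiff.1 hx with ⟨-, hxB⟩
      have : x ∈ S ∪ B := by rw [hcov2]; exact Finset.mem_univ x
      exact Finset.mem_sdiff.2 ⟨(Finset.mem_union.1 this).resolve_right hxB, hxB⟩
    rw [hSB, Finset.card_sdiff_of_subset (Finset.subset_univ B), hku, hcardB]
    omega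
  · have hTA : T \ A = Finset.univ \ A := by
      apply Finset.Subset.antisymm (Finset.sdiff_subset_sdiff (Finset.subset_univ T) le_rfl)
      intro x hx
      rcases Finset.mem_sdiff.1 hx with ⟨-, hxA⟩
      have : x ∈ A ∪ T := by rw [hcov1]; exact Finset.mem_univ x
      exact Finset.mem_sdiff.2 ⟨(Finset.mem_union.1 this).resolve_left hxA, hxA⟩
    rw [hTA, Finset.card_sdiff_of_subset (Finset.subset_univ A), hku, hcardA]
    omega
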